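/- arXiv:2509.05761 — 2 statements merged into one kernel-verified Lean document; each statement's English description precedes it below -/
import Mathlib

section
/- For all nonnegative integers m and n and any x, the degenerate Fubini polynomials satisfy the Spivey-type recurrence F_{n+m,λ}(x) = Σ_{k=0}^m Σ_{l=0}^n k! {m brace k}_λ C(n,l) x^k F_{n−l,λ}^{(k)}(x, k−mλ) F_{l,λ}(x). -/
open PowerSeries

/-- The degenerate falling factorial `(x)_{n,λ}`. -/
def degFall (lam x : ℝ) (n : ℕ) : ℝ := ∏ i ∈ Finset.range n, (x - i * lam)

/-- The ordinary falling factorial `(x)_k`. -/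
def fallF (x : ℝ) (k : ℕ) : ℝ := ∏ i ∈ Finset.range k, (x - i)

/-- The degenerate exponential `e_λ^y(t) = Σ_{m≥0} (y)_{m,λ} t^m/m!`. -/
noncomputable def degExpP (lam y : ℝ) : PowerSeries ℝ :=
  PowerSeries.mk fun m => degFall lam y m / (Nat.factorial m)

/-- The two-variable degenerate Fubini polynomials of order `k ∈ ℕ`, defined by
`(1/(1 − x(e_λ(t) − 1)))^k e_λ^y(t) = Σ_j F_{j,λ}^{(k)}(x,y) t^j/j!`. -/
noncomputable def degFubiniOrd (lam : ℝ) (k : ℕ) (x y : ℝ) (j : ℕ) : ℝ :=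
  (Nat.factorial j : ℝ) * PowerSeries.coeff (R := ℝ) j
    (((1 - PowerSeries.C (R := ℝ) x * (degExpP lam 1 - 1))⁻¹) ^ k * degExpP lam y)

/-!
Put `G(t) = 1/(1 - x(e_λ(t) - 1))`, so that `F_{n,λ}(x) = n! [tⁿ] G` once the degenerate Stirling
numbers are read off their generating function `(e_λ(t) - 1)^k / k! = Σ_n {n brace k}_λ tⁿ/n!`
(binomial inversion identifies these with the coefficients `S` of the falling-factorial expansion).
From `G' = x e_λ^{1-λ}(t) G²` and `(e_λ^y)' = y e_λ^{y-λ}` one gets by induction on `m`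
`G^{(m)} = Σ_k k! {m brace k}_λ x^k G^{k+1} e_λ^{k-mλ}(t)`: differentiating reproduces exactly the
recurrence `{m+1 brace k+1}_λ = {m brace k}_λ + (k+1-mλ) {m brace k+1}_λ`, which itself follows from
the differential equation `(1 + λt) (e_λ^y)' = y e_λ^y`. Since `n! [tⁿ] G^{(m)} = F_{n+m,λ}(x)`,
expanding the product `(G^k e_λ^{k-mλ}) · G` as a binomial convolution of exponential generating
functions gives the recurrence.
-/

open Finset
open scoped Nat

section GeneralPowerSeries

variable {R : Type*} [CommSemiring R]

theorem coeff_X_mul_derivative (f : R⟦X⟧) (n : ℕ) :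
    coeff n (X * d⁄dX R f) = n * coeff n f := by
  cases n <;> simp [coeff_succ_X_mul, coeff_derivative, mul_comm]

theorem coeff_pow_mul_eq_zero_of_lt {u : R⟦X⟧} (hu : constantCoeff u = 0) {n k : ℕ} (h : n < k)
    (f : R⟦X⟧) : coeff n (u ^ k * f) = 0 :=
  X_pow_dvd_iff.1 ((pow_dvd_pow_of_dvd (X_dvd_iff.2 hu) k).mul_right f) n h

theorem factorial_mul_coeff_iterate_derivative (f : R⟦X⟧) (m n : ℕ) :
    n ! * coeff n ((d⁄dX R)^[m] f) = (n + m)! * coeff (n + m) f := by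
  rw [coeff_iterate_derivative, ← mul_assoc, ← Nat.cast_mul, Nat.factorial_mul_ascFactorial]

theorem factorial_mul_coeff_mul (f g : R⟦X⟧) (n : ℕ) :
    n ! * coeff n (f * g) = ∑ l ∈ range (n + 1),
      n.choose l * ((n - l)! * coeff (n - l) f) * (l ! * coeff l g) := by
  rw [coeff_mul, ← Nat.sum_antidiagonal_swap]
  simp only [Prod.fst_swap, Prod.snd_swap]
  rw [Nat.sum_antidiagonal_eq_sum_range_succ (fun i j => coeff j f * coeff i g), mul_sum]
  refine sum_congr rfl fun l hl => ?_
  rw [← Nat.choose_mul_factorial_mul_factorial (Nat.lt_succ_iff.1 (mem_range.1 hl))]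
  push_cast
  ring

end GeneralPowerSeries

theorem coeff_inv_one_sub {K : Type*} [Field K] {u : K⟦X⟧} (hu : constantCoeff u = 0) (n : ℕ) :
    coeff n (1 - u)⁻¹ = ∑ k ∈ range (n + 1), coeff n (u ^ k) := by
  have hinv : (1 - u) * (1 - u)⁻¹ = 1 := PowerSeries.mul_inv_cancel _ (by simp [hu])
  have hsplit : (1 - u)⁻¹ = ∑ k ∈ range (n + 1), u ^ k + u ^ (n + 1) * (1 - u)⁻¹ := by
    linear_combination (∑ k ∈ range (n + 1), u ^ k) * hinv - (1 - u)⁻¹ * geom_sum_mul_neg u (n + 1)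
  rw [hsplit, map_add, map_sum, coeff_pow_mul_eq_zero_of_lt hu (Nat.lt_succ_self n), add_zero]

theorem fallF_natCast (j i : ℕ) : fallF j i = i ! * j.choose i := by
  rw [fallF, ← descPochhammer_eval_eq_prod_range, descPochhammer_eval_eq_descFactorial,
    Nat.descFactorial_eq_factorial_mul_choose]
  push_cast
  rfl

theorem sum_neg_one_pow_mul_choose_mul_choose {R : Type*} [Ring R] (k i : ℕ) :
    ∑ j ∈ range (k + 1), (-1 : R) ^ (k - j) * k.choose j * j.choose i = if k = i then 1 else 0 := by
  have h := fwdDiff_iter_choose_zero i k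
  rw [fwdDiff_iter_eq_sum_shift] at h
  simp only [zero_add, smul_eq_mul, mul_one] at h
  simpa [apply_ite] using congrArg (Int.cast : ℤ → R) h

theorem sum_range_smul_shift_add {R M : Type*} [Semiring R] [AddCommMonoid M] [Module R M]
    (a b d : ℕ → R) (T : ℕ → M) (n : ℕ) (h0 : d 0 = b 0) (hsucc : ∀ k, d (k + 1) = a k + b (k + 1))
    (htop : b (n + 1) = 0) :
    ∑ k ∈ range (n + 1), (a k • T (k + 1) + b k • T k) = ∑ k ∈ range (n + 2), d k • T k := by
  rw [sum_add_distrib, sum_range_succ' (fun k => d k • T k), sum_range_succ' (fun k => b k • T k)]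
  simp_rw [hsucc, add_smul, sum_add_distrib, h0]
  rw [sum_range_succ (fun k => b (k + 1) • T (k + 1)), htop, zero_smul, add_zero, add_assoc]

section DegenerateFallingFactorial

variable (lam : ℝ)

theorem degFall_succ (z : ℝ) (n : ℕ) : degFall lam z (n + 1) = degFall lam z n * (z - n * lam) :=
  prod_range_succ _ _

theorem degFall_succ_eq_mul_degFall_sub (z : ℝ) (n : ℕ) :
    degFall lam z (n + 1) = z * degFall lam (z - lam) n := by
  rw [degFall, prod_range_succ', degFall, mul_comm]
  simp only [Nat.cast_add, Nat.cast_one, Nat.cast_zero, zero_mul, sub_zero]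
  exact congrArg _ (prod_congr rfl fun i _ => by ring)

theorem degFall_add (a b : ℝ) (n : ℕ) :
    degFall lam (a + b) n =
      ∑ ij ∈ antidiagonal n, (n.choose ij.1 : ℝ) * (degFall lam a ij.1 * degFall lam b ij.2) := by
  induction n with
  | zero => simp [degFall]
  | succ n ih =>
    rw [sum_antidiagonal_choose_succ_mul (fun i j => degFall lam a i * degFall lam b j),
      degFall_succ, ih, sum_mul, ← sum_add_distrib]
    refine sum_congr rfl fun ij hij => ?_
    rw [HasAntidiagonal.mem_antidiagonal] at hij
    rw [← Nat.choose_symm_of_eq_add hij.symm, degFall_succ, degFall_succ, ← hij]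
    push_cast
    ring

end DegenerateFallingFactorial

section DegenerateExponential

variable (lam : ℝ)

theorem coeff_degExpP (y : ℝ) (n : ℕ) : coeff n (degExpP lam y) = degFall lam y n / n ! :=
  coeff_mk _ _

theorem constantCoeff_degExpP (y : ℝ) : constantCoeff (degExpP lam y) = 1 := by
  simp [← coeff_zero_eq_constantCoeff_apply, coeff_degExpP, degFall]

theorem degExpP_zero : degExpP lam 0 = 1 := by
  ext (_ | n)
  · simp [coeff_degExpP, degFall]
  · simp [coeff_degExpP, degFall_succ_eq_mul_degFall_sub, coeff_one]

theorem degExpP_add (a b : ℝ) : degExpP lam (a + b) = degExpP lam a * degExpP lam b := by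
  ext n
  rw [coeff_mul, coeff_degExpP, degFall_add, sum_div]
  refine sum_congr rfl fun ij hij => ?_
  rw [HasAntidiagonal.mem_antidiagonal] at hij
  rw [coeff_degExpP, coeff_degExpP, ← hij, Nat.cast_add_choose]
  field_simp

theorem degExpP_natCast (j : ℕ) : degExpP lam j = degExpP lam 1 ^ j := by
  induction j with
  | zero => simp [degExpP_zero]
  | succ j ih => rw [Nat.cast_succ, degExpP_add, ih, pow_succ]

theorem derivative_degExpP (y : ℝ) :
    d⁄dX ℝ (degExpP lam y) = C y * degExpP lam (y - lam) := by
  ext n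
  rw [coeff_derivative, coeff_C_mul, coeff_degExpP, coeff_degExpP,
    degFall_succ_eq_mul_degFall_sub, Nat.factorial_succ]
  push_cast
  field_simp

theorem one_add_C_mul_X_mul_derivative_degExpP (y : ℝ) :
    (1 + C lam * X) * d⁄dX ℝ (degExpP lam y) = C y * degExpP lam y := by
  ext n
  rw [add_mul, one_mul, mul_assoc, map_add, coeff_C_mul, coeff_X_mul_derivative, coeff_derivative,
    coeff_C_mul, coeff_degExpP, coeff_degExpP, degFall_succ, Nat.factorial_succ]
  push_cast
  field_simp
  ring

end DegenerateExponential

section DegenerateStirling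

variable (lam : ℝ)

noncomputable def degStirling (n k : ℕ) : ℝ := n ! / k ! * coeff n ((degExpP lam 1 - 1) ^ k)

theorem constantCoeff_degExpP_sub_one : constantCoeff (degExpP lam 1 - 1) = 0 := by
  simp [constantCoeff_degExpP]

theorem coeff_degExpP_sub_one_pow (n k : ℕ) :
    coeff n ((degExpP lam 1 - 1) ^ k) = k ! * degStirling lam n k / n ! := by
  rw [degStirling]
  field_simp

theorem degStirling_eq_zero_of_lt {n k : ℕ} (h : n < k) : degStirling lam n k = 0 := by
  rw [degStirling, ← mul_one ((degExpP lam 1 - 1) ^ k),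
    coeff_pow_mul_eq_zero_of_lt (constantCoeff_degExpP_sub_one lam) h, mul_zero]

theorem degStirling_zero_right (n : ℕ) : degStirling lam n 0 = if n = 0 then 1 else 0 := by
  rw [degStirling, pow_zero, coeff_one]
  split_ifs with h <;> simp [h]

theorem degStirling_succ_succ (m k : ℕ) :
    degStirling lam (m + 1) (k + 1) =
      degStirling lam m k + (k + 1 - m * lam) * degStirling lam m (k + 1) := by
  have hode : (1 + C lam * X) * d⁄dX ℝ ((degExpP lam 1 - 1) ^ (k + 1)) =
      C (k + 1 : ℝ) * ((degExpP lam 1 - 1) ^ (k + 1) + (degExpP lam 1 - 1) ^ k) := by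
    rw [derivative_pow, map_sub, derivative_one, sub_zero, mul_left_comm,
      one_add_C_mul_X_mul_derivative_degExpP]
    simp only [map_one, one_mul, Nat.add_sub_cancel, map_add, map_natCast, pow_succ]
    push_cast
    ring
  have hcoeff := congrArg (coeff m) hode
  rw [add_mul, one_mul, mul_assoc, map_add, coeff_C_mul, coeff_X_mul_derivative, coeff_derivative,
    coeff_C_mul, map_add] at hcoeff
  simp only [degStirling, Nat.factorial_succ, Nat.cast_mul] at hcoeff ⊢
  push_cast
  field_simp
  linear_combination hcoeff

theorem degExpP_sub_one_pow (k : ℕ) :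
    (degExpP lam 1 - 1) ^ k =
      ∑ j ∈ range (k + 1), C ((-1 : ℝ) ^ (k - j) * k.choose j) * degExpP lam j := by
  rw [sub_eq_add_neg, add_pow]
  refine sum_congr rfl fun j _ => ?_
  rw [degExpP_natCast]
  simp only [map_mul, map_pow, map_neg, map_one, map_natCast]
  ring

theorem factorial_mul_degStirling (n k : ℕ) :
    k ! * degStirling lam n k =
      ∑ j ∈ range (k + 1), (-1) ^ (k - j) * k.choose j * degFall lam j n := by
  rw [degStirling, degExpP_sub_one_pow, map_sum, mul_sum, mul_sum]
  refine sum_congr rfl fun j _ => ?_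
  rw [coeff_C_mul, coeff_degExpP]
  field_simp

theorem degStirling_eq_of_degFall_eq_sum (S : ℕ → ℕ → ℝ)
    (hS : ∀ (n : ℕ) (z : ℝ), degFall lam z n = ∑ k ∈ range (n + 1), S n k * fallF z k)
    {n k : ℕ} (h : k ≤ n) : degStirling lam n k = S n k := by
  refine mul_left_cancel₀ (Nat.cast_ne_zero.2 (Nat.factorial_ne_zero k)) ?_
  rw [factorial_mul_degStirling]
  simp_rw [hS n, fallF_natCast, mul_sum]
  rw [sum_comm]
  calc ∑ i ∈ range (n + 1), ∑ j ∈ range (k + 1),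
        (-1) ^ (k - j) * (k.choose j : ℝ) * (S n i * (i ! * j.choose i))
      = ∑ i ∈ range (n + 1), S n i * i ! * (if k = i then 1 else 0) := by
        refine sum_congr rfl fun i _ => ?_
        rw [← sum_neg_one_pow_mul_choose_mul_choose, mul_sum]
        exact sum_congr rfl fun j _ => by ring
    _ = k ! * S n k := by simp [mul_comm, Nat.lt_succ_iff.2 h]

end DegenerateStirling

section FubiniSeries

variable (lam x : ℝ)

noncomputable def fubiniSeries : ℝ⟦X⟧ := (1 - C x * (degExpP lam 1 - 1))⁻¹

theorem degFubiniOrd_eq (k : ℕ) (y : ℝ) (j : ℕ) :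
    degFubiniOrd lam k x y j = j ! * coeff j (fubiniSeries lam x ^ k * degExpP lam y) :=
  rfl

theorem factorial_mul_coeff_fubiniSeries (n : ℕ) :
    n ! * coeff n (fubiniSeries lam x) =
      ∑ k ∈ range (n + 1), k ! * degStirling lam n k * x ^ k := by
  rw [fubiniSeries, coeff_inv_one_sub (by simp [constantCoeff_degExpP_sub_one]), mul_sum]
  refine sum_congr rfl fun k _ => ?_
  rw [mul_pow, ← map_pow, coeff_C_mul, coeff_degExpP_sub_one_pow]
  field_simp

theorem derivative_fubiniSeries :
    d⁄dX ℝ (fubiniSeries lam x) = C x * degExpP lam (1 - lam) * fubiniSeries lam x ^ 2 := by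
  rw [fubiniSeries, derivative_inv', map_sub, derivative_one, zero_sub, Derivation.leibniz,
    derivative_C, smul_zero, add_zero, map_sub, derivative_one, sub_zero, derivative_degExpP,
    map_one, one_mul, smul_eq_mul]
  ring

theorem derivative_fubiniSeries_pow_mul_degExpP (k : ℕ) (y : ℝ) :
    d⁄dX ℝ (fubiniSeries lam x ^ (k + 1) * degExpP lam y) =
      ((k + 1) * x) • (fubiniSeries lam x ^ (k + 2) * degExpP lam (y + 1 - lam)) +
        y • (fubiniSeries lam x ^ (k + 1) * degExpP lam (y - lam)) := by
  rw [Derivation.leibniz, derivative_pow, derivative_fubiniSeries, derivative_degExpP,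
    show y + 1 - lam = 1 - lam + y by ring, degExpP_add, smul_eq_C_mul, smul_eq_C_mul,
    Nat.add_sub_cancel]
  simp only [map_mul, map_add, map_natCast, map_one, Nat.cast_add_one]
  ring

theorem iterate_derivative_fubiniSeries (m : ℕ) :
    (d⁄dX ℝ)^[m] (fubiniSeries lam x) = ∑ k ∈ range (m + 1), (k ! * degStirling lam m k * x ^ k) •
      (fubiniSeries lam x ^ (k + 1) * degExpP lam (k - m * lam)) := by
  induction m with
  | zero => simp [degStirling_zero_right, degExpP_zero]
  | succ m ih =>
    let T (k : ℕ) := fubiniSeries lam x ^ (k + 1) * degExpP lam (k - (m + 1 : ℕ) * lam)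
    have hderiv (k : ℕ) : d⁄dX ℝ (fubiniSeries lam x ^ (k + 1) * degExpP lam (k - m * lam)) =
        ((k + 1) * x) • T (k + 1) + (k - m * lam) • T k := by
      rw [derivative_fubiniSeries_pow_mul_degExpP,
        show (k : ℝ) - m * lam + 1 - lam = (k + 1 : ℕ) - (m + 1 : ℕ) * lam by push_cast; ring,
        show (k : ℝ) - m * lam - lam = k - (m + 1 : ℕ) * lam by push_cast; ring]
    rw [Function.iterate_succ_apply', ih, map_sum]
    simp_rw [Derivation.map_smul, hderiv, smul_add, smul_smul]
    refine sum_range_smul_shift_add (fun k => k ! * degStirling lam m k * x ^ k * ((k + 1) * x))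
      (fun k => k ! * degStirling lam m k * x ^ k * (k - m * lam)) _ T m ?_ (fun k => ?_) ?_
    · rcases m with _ | m <;> simp [degStirling_zero_right]
    · simp only [degStirling_succ_succ, Nat.factorial_succ]
      push_cast
      ring
    · simp [degStirling_eq_zero_of_lt]

end FubiniSeries

theorem sum_factorial_mul_pow_eq_factorial_mul_coeff_fubiniSeries (lam x : ℝ)
    (S : ℕ → ℕ → ℝ)
    (hS : ∀ (n : ℕ) (z : ℝ), degFall lam z n = ∑ k ∈ range (n + 1), S n k * fallF z k) (n : ℕ) :
    ∑ j ∈ range (n + 1), (j ! : ℝ) * S n j * x ^ j = n ! * coeff n (fubiniSeries lam x) := by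
  rw [factorial_mul_coeff_fubiniSeries]
  refine sum_congr rfl fun j hj => ?_
  rw [degStirling_eq_of_degFall_eq_sum lam S hS (Nat.lt_succ_iff.1 (mem_range.1 hj))]

/-- Spivey-type recurrence for the degenerate Fubini polynomials
`F_{n,λ}(x) = Σ_{k=0}^n k! {n brace k}_λ x^k`:
`F_{n+m,λ}(x) = Σ_{k=0}^m Σ_{l=0}^n k! {m brace k}_λ C(n,l) x^k
F_{n−l,λ}^{(k)}(x, k−mλ) F_{l,λ}(x)`, where `S n k = {n brace k}_λ` is defined
by `(x)_{n,λ} = Σ_k S n k (x)_k`. -/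
theorem stmt11 (lam x : ℝ) (S : ℕ → ℕ → ℝ)
    (hS : ∀ (n : ℕ) (z : ℝ),
      degFall lam z n = ∑ k ∈ Finset.range (n + 1), S n k * fallF z k)
    (n m : ℕ) :
    (∑ j ∈ Finset.range (n + m + 1), (Nat.factorial j : ℝ) * S (n + m) j * x ^ j) =
      ∑ k ∈ Finset.range (m + 1), ∑ l ∈ Finset.range (n + 1),
        (Nat.factorial k : ℝ) * S m k * (n.choose l : ℝ) * x ^ k *
          degFubiniOrd lam k x ((k : ℝ) - m * lam) (n - l) *
          (∑ j ∈ Finset.range (l + 1), (Nat.factorial j : ℝ) * S l j * x ^ j) := by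
  have hF := sum_factorial_mul_pow_eq_factorial_mul_coeff_fubiniSeries lam x S hS
  rw [hF, ← factorial_mul_coeff_iterate_derivative, iterate_derivative_fubiniSeries, map_sum,
    mul_sum]
  refine sum_congr rfl fun k hk => ?_
  rw [degStirling_eq_of_degFall_eq_sum lam S hS (Nat.lt_succ_iff.1 (mem_range.1 hk)), coeff_smul,
    smul_eq_mul, mul_left_comm, pow_succ, mul_right_comm _ (fubiniSeries lam x),
    factorial_mul_coeff_mul, mul_sum]
  refine sum_congr rfl fun l _ => ?_
  rw [hF, degFubiniOrd_eq]
  ring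
end

section
/- For all n ≥ 0, the fully degenerate Bell number Bel_{n,λ} = Σ_{k=0}^n {n brace k}_λ (1)_{k,λ} reduces at λ = 0 to the Bell number φ_n (the number of set partitions of an n-element set), i.e., the Spivey recurrence Bel_{n+m,λ} = Σ_{l,k} (1)_{k,λ}{m brace k}_λ C(n,l) Bel_{l,λ} F_{n−l,λ}^{(k)}(−λ, k−mλ) specializes at λ = 0 to φ_{n+m} = Σ_{l=0}^n Σ_{k=0}^m {m brace k} C(n,l) k^{n−l} φ_l. -/
open PowerSeries

/-!
Expansions in the falling factorials `fallF z k` are unique (evaluate at `z = 0, 1, 2, …`),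
so `S 0 = T` because `degFall 0 z n = z ^ n`, and at `λ = 0` the degenerate factors
`(1)_{k,λ}` and `F^{(k)}_{j,λ}(-λ, k - mλ)` become `1` and `k ^ j`. For Spivey's recurrence,
write `z ^ (n + m) = z ^ m * ((z - k) + k) ^ n`, expand `z ^ m` and `(z - k) ^ l` in falling
factorials and use `fallF z (k + j) = fallF z k * fallF (z - k) j`; the Bell number
`Σ_i T N i` is the sum of the coefficients of `z ^ N`, which uniqueness lets us read off
from any expansion, even one in which a falling factorial occurs several times.
-/

open Finset

lemma degFall_zero_left (z : ℝ) (n : ℕ) : degFall 0 z n = z ^ n := by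
  simp [degFall]

lemma degFubiniOrd_zero_zero (k : ℕ) (y : ℝ) (j : ℕ) : degFubiniOrd 0 k 0 y j = y ^ j := by
  have hj : (j.factorial : ℝ) ≠ 0 := by exact_mod_cast j.factorial_ne_zero
  simp [degFubiniOrd, degExpP, degFall_zero_left, mul_div_cancel₀ _ hj]

lemma fallF_natCast_of_lt {j k : ℕ} (h : j < k) : fallF j k = 0 :=
  prod_eq_zero (mem_range.mpr h) (sub_self _)

lemma fallF_natCast_self_ne_zero (j : ℕ) : fallF j j ≠ 0 :=
  prod_ne_zero_iff.mpr fun i hi => sub_ne_zero.mpr (by exact_mod_cast (mem_range.mp hi).ne')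

lemma fallF_add (z : ℝ) (k j : ℕ) : fallF z (k + j) = fallF z k * fallF (z - k) j := by
  simp only [fallF, prod_range_add, Nat.cast_add, sub_sub]

lemma eq_of_forall_sum_mul_fallF_eq {N : ℕ} {a b : ℕ → ℝ}
    (h : ∀ z, ∑ k ∈ range N, a k * fallF z k = ∑ k ∈ range N, b k * fallF z k)
    {j : ℕ} (hj : j < N) : a j = b j := by
  induction j using Nat.strong_induction_on with
  | _ j ih =>
    have hsingle : ∀ c : ℕ → ℝ, (∀ k < j, c k = 0) →
        ∑ k ∈ range N, c k * fallF j k = c j * fallF j j := fun c hc =>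
      sum_eq_single_of_mem j (mem_range.mpr hj) fun k _ hkj => by
        rcases hkj.lt_or_gt with hlt | hgt
        · rw [hc k hlt, zero_mul]
        · rw [fallF_natCast_of_lt hgt, mul_zero]
    have hsub : ∑ k ∈ range N, (a k - b k) * fallF j k = 0 := by
      simp only [sub_mul, sum_sub_distrib, h, sub_self]
    rw [hsingle (fun k => a k - b k) fun k hk => sub_eq_zero.mpr (ih k hk (hk.trans hj))] at hsub
    exact sub_eq_zero.mp ((mul_eq_zero.mp hsub).resolve_right (fallF_natCast_self_ne_zero j))

lemma sum_eq_sum_of_forall_fallF_expansion {ι : Type*} {N : ℕ} {a : ℕ → ℝ} {s : Finset ι}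
    {A : ι → ℝ} {d : ι → ℕ} (hd : ∀ x ∈ s, d x < N)
    (h : ∀ z, ∑ i ∈ range N, a i * fallF z i = ∑ x ∈ s, A x * fallF z (d x)) :
    ∑ i ∈ range N, a i = ∑ x ∈ s, A x := by
  have hmaps : ∀ x ∈ s, d x ∈ range N := fun x hx => mem_range.mpr (hd x hx)
  have hfiber : ∀ i < N, a i = ∑ x ∈ s with d x = i, A x := by
    refine fun i hi => eq_of_forall_sum_mul_fallF_eq
      (b := fun i => ∑ x ∈ s with d x = i, A x) (fun z => ?_) hi
    simp_rw [h z, sum_mul, ← sum_fiberwise_of_maps_to hmaps (fun x => A x * fallF z (d x))]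
    refine sum_congr rfl fun i _ => sum_congr rfl fun x hx => ?_
    rw [(mem_filter.mp hx).2]
  rw [sum_congr rfl fun i hi => hfiber i (mem_range.mp hi), sum_fiberwise_of_maps_to hmaps]

section Spivey

variable (T : ℕ → ℕ → ℝ)
  (hT : ∀ (n : ℕ) (z : ℝ), z ^ n = ∑ k ∈ range (n + 1), T n k * fallF z k)
include hT

lemma pow_add_eq_sum_fallF (n m : ℕ) (z : ℝ) :
    z ^ (n + m) = ∑ k ∈ range (m + 1), ∑ l ∈ range (n + 1), ∑ j ∈ range (l + 1),
      T m k * (n.choose l : ℝ) * (k : ℝ) ^ (n - l) * T l j * fallF z (k + j) := by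
  rw [pow_add, mul_comm, hT m z, sum_mul]
  refine sum_congr rfl fun k _ => ?_
  have hbinom :
      z ^ n = ∑ l ∈ range (n + 1), (n.choose l : ℝ) * (k : ℝ) ^ (n - l) * (z - k) ^ l := by
    rw [← sub_add_cancel z k, add_pow, sub_add_cancel]
    exact sum_congr rfl fun l _ => by ring
  rw [hbinom, mul_sum]
  refine sum_congr rfl fun l _ => ?_
  rw [hT l (z - k), mul_sum, mul_sum]
  refine sum_congr rfl fun j _ => ?_
  rw [fallF_add]
  ring

theorem sum_stirling_add_eq (n m : ℕ) :
    ∑ i ∈ range (n + m + 1), T (n + m) i =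
      ∑ l ∈ range (n + 1), ∑ k ∈ range (m + 1),
        T m k * (n.choose l : ℝ) * (k : ℝ) ^ (n - l) * ∑ j ∈ range (l + 1), T l j := by
  let s := range (m + 1) ×ˢ (range (n + 1)).sigma fun l => range (l + 1)
  have hs : ∀ x ∈ s, x.1 + x.2.2 < n + m + 1 := by
    simp only [s, mem_product, mem_sigma, mem_range]
    omega
  have hexp : ∀ z, ∑ i ∈ range (n + m + 1), T (n + m) i * fallF z i =
      ∑ x ∈ s, T m x.1 * (n.choose x.2.1 : ℝ) * (x.1 : ℝ) ^ (n - x.2.1) * T x.2.1 x.2.2 *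
        fallF z (x.1 + x.2.2) := fun z => by
    rw [← hT, pow_add_eq_sum_fallF T hT]
    simp only [s, sum_product, sum_sigma]
  rw [sum_eq_sum_of_forall_fallF_expansion hs hexp]
  simp only [s, sum_product, sum_sigma, mul_sum]
  exact sum_comm

end Spivey

/-- At `λ = 0` the fully degenerate Bell number `Bel_{n,λ} = Σ_k {n brace k}_λ (1)_{k,λ}`
reduces to the Bell number `φ_n = Σ_k {n brace k}`, the right-hand side of the
degenerate Spivey recurrence specializes to the classical one, and the classical
Spivey recurrence `φ_{n+m} = Σ_{l=0}^n Σ_{k=0}^m {m brace k} C(n,l) k^{n−l} φ_l`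
holds.  Here `S lam n k = {n brace k}_λ` is defined by
`(z)_{n,λ} = Σ_k S lam n k (z)_k` and `T n k = {n brace k}` by
`z^n = Σ_k T n k (z)_k`. -/
theorem stmt17 (S : ℝ → ℕ → ℕ → ℝ)
    (hS : ∀ (lam : ℝ) (n : ℕ) (z : ℝ),
      degFall lam z n = ∑ k ∈ Finset.range (n + 1), S lam n k * fallF z k)
    (T : ℕ → ℕ → ℝ)
    (hT : ∀ (n : ℕ) (z : ℝ), z ^ n = ∑ k ∈ Finset.range (n + 1), T n k * fallF z k)
    (n m : ℕ) :
    (∀ N : ℕ, ∑ k ∈ Finset.range (N + 1), S 0 N k * degFall 0 1 k =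
        ∑ k ∈ Finset.range (N + 1), T N k) ∧
    (∑ l ∈ Finset.range (n + 1), ∑ k ∈ Finset.range (m + 1),
        degFall 0 1 k * S 0 m k * (n.choose l : ℝ) *
          (∑ j ∈ Finset.range (l + 1), S 0 l j * degFall 0 1 j) *
          degFubiniOrd 0 k (-(0 : ℝ)) ((k : ℝ) - m * 0) (n - l) =
      ∑ l ∈ Finset.range (n + 1), ∑ k ∈ Finset.range (m + 1),
        T m k * (n.choose l : ℝ) * (k : ℝ) ^ (n - l) *
          (∑ j ∈ Finset.range (l + 1), T l j)) ∧
    (∑ k ∈ Finset.range (n + m + 1), T (n + m) k) =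
      ∑ l ∈ Finset.range (n + 1), ∑ k ∈ Finset.range (m + 1),
        T m k * (n.choose l : ℝ) * (k : ℝ) ^ (n - l) *
          (∑ j ∈ Finset.range (l + 1), T l j) := by
  have hST : ∀ N k, k < N + 1 → S 0 N k = T N k := fun N k hk =>
    eq_of_forall_sum_mul_fallF_eq (fun z => by rw [← hS, ← hT, degFall_zero_left]) hk
  have hone : ∀ k, degFall 0 1 k = 1 := fun k => by rw [degFall_zero_left, one_pow]
  have hBell : ∀ N,
      ∑ k ∈ range (N + 1), S 0 N k * degFall 0 1 k = ∑ k ∈ range (N + 1), T N k :=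
    fun N => sum_congr rfl fun k hk => by rw [hone, mul_one, hST N k (mem_range.mp hk)]
  refine ⟨hBell, ?_, sum_stirling_add_eq T hT n m⟩
  refine sum_congr rfl fun l _ => sum_congr rfl fun k hk => ?_
  rw [hBell, hone, hST m k (mem_range.mp hk), neg_zero, mul_zero, sub_zero,
    degFubiniOrd_zero_zero]
  ring
end
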